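/- For all real numbers s₁, s₂ ≥ 0 and a > 0, one has (s₁ - s₂)(s₁^a - s₂^a) ≥ (4a/(a+1)²) (s₁^((a+1)/2) - s₂^((a+1)/2))². -/

import Mathlib

open MeasureTheory intervalIntegral Real

lemma key_cs (s₁ s₂ a : ℝ) (h2 : 0 ≤ s₂) (hs : s₂ ≤ s₁) (ha : 0 < a) :
    ((s₁ ^ ((a + 1) / 2) - s₂ ^ ((a + 1) / 2)) / ((a + 1) / 2)) ^ 2 ≤
      (s₁ ^ a - s₂ ^ a) / a * (s₁ - s₂) := by
  set c : ℝ := (a - 1) / 2 with hc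
  have hc1 : (-1 : ℝ) < c := by rw [hc]; linarith
  have h2c1 : (-1 : ℝ) < 2 * c := by rw [hc]; linarith
  have h1 : 0 ≤ s₁ := le_trans h2 hs
  set μ : Measure ℝ := volume.restrict (Set.Ioc s₂ s₁) with hμ
  haveI : IsFiniteMeasure μ := ⟨by
    rw [hμ, Measure.restrict_apply_univ]; exact measure_Ioc_lt_top⟩
  have hae : ∀ᵐ x ∂μ, x ∈ Set.Ioc s₂ s₁ := ae_restrict_mem measurableSet_Ioc
  have hfnn : 0 ≤ᵐ[μ] fun x : ℝ => x ^ c := by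
    filter_upwards [hae] with x hx
    exact Real.rpow_nonneg (le_trans h2 hx.1.le) _
  have hgnn : 0 ≤ᵐ[μ] fun _ : ℝ => (1 : ℝ) := Filter.Eventually.of_forall fun _ => zero_le_one
  have hint : IntegrableOn (fun x : ℝ => x ^ (2 * c)) (Set.Ioc s₂ s₁) volume := by
    rw [← intervalIntegrable_iff_integrableOn_Ioc_of_le hs]
    exact intervalIntegrable_rpow' h2c1
  have hf : MemLp (fun x : ℝ => x ^ c) (ENNReal.ofReal 2) μ := by
    have h2e : ENNReal.ofReal 2 = 2 := by norm_num
    have hcont : ContinuousOn (fun x : ℝ => x ^ c) (Set.Ioc s₂ s₁) := fun x hx =>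
      (Real.continuousAt_rpow_const x c
        (Or.inl (lt_of_le_of_lt h2 hx.1).ne')).continuousWithinAt
    rw [h2e, memLp_two_iff_integrable_sq
      (hcont.aestronglyMeasurable measurableSet_Ioc)]
    refine (hint.congr_fun ?_ measurableSet_Ioc)
    intro x hx
    have hx0 : 0 < x := lt_of_le_of_lt h2 hx.1
    simp only [pow_two, ← Real.rpow_add hx0, two_mul]
  have hg : MemLp (fun _ : ℝ => (1 : ℝ)) (ENNReal.ofReal 2) μ := memLp_const 1
  have holder := integral_mul_le_Lp_mul_Lq_of_nonneg
    (Real.holderConjugate_iff.mpr ⟨one_lt_two, by norm_num⟩) hfnn hgnn hf hg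
  -- compute the three integrals
  have hI : ∫ x, (fun x : ℝ => x ^ c) x * 1 ∂μ
      = (s₁ ^ (c + 1) - s₂ ^ (c + 1)) / (c + 1) := by
    simp only [mul_one]
    rw [hμ, ← intervalIntegral.integral_of_le hs, integral_rpow (Or.inl hc1)]
  have hJ : ∫ x, (fun x : ℝ => x ^ c) x ^ (2 : ℝ) ∂μ = (s₁ ^ a - s₂ ^ a) / a := by
    have : ∫ x, (fun x : ℝ => x ^ c) x ^ (2 : ℝ) ∂μ = ∫ x, x ^ (2 * c) ∂μ := by
      refine integral_congr_ae ?_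
      filter_upwards [hae] with x hx
      rw [← Real.rpow_mul (le_trans h2 hx.1.le)]
      ring_nf
    rw [this, hμ, ← intervalIntegral.integral_of_le hs, integral_rpow (Or.inl h2c1)]
    have h2c : 2 * c + 1 = a := by rw [hc]; ring
    rw [h2c]
  have hK : ∫ x, (fun _ : ℝ => (1 : ℝ)) x ^ (2 : ℝ) ∂μ = s₁ - s₂ := by
    simp only [Real.one_rpow]
    rw [hμ, setIntegral_const, smul_eq_mul, mul_one,
      measureReal_def, Real.volume_Ioc, ENNReal.toReal_ofReal (by linarith)]
  rw [hI, hJ, hK] at holder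
  have hJnn : 0 ≤ (s₁ ^ a - s₂ ^ a) / a :=
    div_nonneg (by nlinarith [Real.rpow_le_rpow h2 hs ha.le]) ha.le
  have hKnn : 0 ≤ s₁ - s₂ := by linarith
  have hInn : 0 ≤ (s₁ ^ (c + 1) - s₂ ^ (c + 1)) / (c + 1) := by
    have hcp : 0 < c + 1 := by linarith
    exact div_nonneg (by nlinarith [Real.rpow_le_rpow h2 hs hcp.le]) hcp.le
  have hsq : ∀ t : ℝ, 0 ≤ t → (t ^ ((1:ℝ)/2)) ^ 2 = t := by
    intro t ht
    rw [← Real.rpow_natCast (t ^ ((1:ℝ)/2)) 2, ← Real.rpow_mul ht]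
    norm_num
  have hb : c + 1 = (a + 1) / 2 := by rw [hc]; ring
  rw [hb] at holder hInn
  calc ((s₁ ^ ((a + 1) / 2) - s₂ ^ ((a + 1) / 2)) / ((a + 1) / 2)) ^ 2
      ≤ (((s₁ ^ a - s₂ ^ a) / a) ^ ((1:ℝ)/2) * (s₁ - s₂) ^ ((1:ℝ)/2)) ^ 2 := by
        apply pow_le_pow_left₀ hInn holder
    _ = (s₁ ^ a - s₂ ^ a) / a * (s₁ - s₂) := by
        rw [mul_pow, hsq _ hJnn, hsq _ hKnn]

lemma key_final (s₁ s₂ a : ℝ) (h2 : 0 ≤ s₂) (hs : s₂ ≤ s₁) (ha : 0 < a) :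
    (s₁ - s₂) * (s₁ ^ a - s₂ ^ a) ≥
      (4 * a / (a + 1) ^ 2) * (s₁ ^ ((a + 1) / 2) - s₂ ^ ((a + 1) / 2)) ^ 2 := by
  have h := key_cs s₁ s₂ a h2 hs ha
  have hb : (0:ℝ) < (a + 1) / 2 := by linarith
  have ha1 : (0:ℝ) < (a + 1) ^ 2 := by positivity
  rw [div_pow] at h
  rw [ge_iff_le, div_mul_eq_mul_div, div_le_iff₀ ha1]
  have h' := (div_le_iff₀ (by positivity : (0:ℝ) < ((a+1)/2)^2)).mp h
  have hu : s₁ ^ a - s₂ ^ a = (s₁ ^ a - s₂ ^ a) / a * a :=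
    (div_mul_cancel₀ _ ha.ne').symm
  rw [hu]
  nlinarith [mul_le_mul_of_nonneg_left h' (by linarith : (0:ℝ) ≤ 4 * a)]

theorem algebraic_power_inequality (s₁ s₂ a : ℝ) (h1 : 0 ≤ s₁) (h2 : 0 ≤ s₂) (ha : 0 < a) :
    (s₁ - s₂) * (s₁ ^ a - s₂ ^ a) ≥
      (4 * a / (a + 1) ^ 2) * (s₁ ^ ((a + 1) / 2) - s₂ ^ ((a + 1) / 2)) ^ 2 := by
  rcases le_total s₂ s₁ with hs | hs
  · exact key_final s₁ s₂ a h2 hs ha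
  · have := key_final s₂ s₁ a h1 hs ha
    nlinarith [this]
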